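/- arXiv:1909.05122 — 3 statements merged into one kernel-verified Lean document; each statement's English description precedes it below -/
import Mathlib

section
/- Let w* > 0, B > 0 with w* ≥ 20B, η > 0 with 4η(w* + 5B) ≤ 1, and |e| ≤ B. If 0 < w < w* - 5B, then w' := w(1 - 4η(w - w* + e))² satisfies w < w' ; that is, iterates strictly below the B-tube around w* increase monotonically. -/
theorem below_tube_increases (wstar B η w e : ℝ)
    (hws : 0 < wstar) (hB : 0 < B) (hwsB : 20 * B ≤ wstar)
    (hη : 0 < η) (hη1 : 4 * η * (wstar + 5 * B) ≤ 1)
    (he : |e| ≤ B) (hw0 : 0 < w) (hw : w < wstar - 5 * B) :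
    w < w * (1 - 4 * η * (w - wstar + e)) ^ 2 := by
  have he' := abs_le.mp he
  have hneg : w - wstar + e < -4 * B := by linarith [he'.2]
  have hfac : 1 < 1 - 4 * η * (w - wstar + e) := by nlinarith
  nlinarith [sq_nonneg (1 - 4 * η * (w - wstar + e)), mul_pos hw0 (by nlinarith : (0:ℝ) < (1 - 4 * η * (w - wstar + e))^2 - 1)]
end

section
/- Let 0 < α ≤ 1, η > 0, and let (c_t)_{t≥0} be a nonnegative sequence such that there exist phase lengths T_i = 2^i·T (for T > 0) with c_t ≤ D·2^{-i} for all t in phase i (i.e., Σ_{j<i} T_j ≤ t < Σ_{j≤i} T_j), where D > 0. Then for any t within phase i, Π_{s=0}^{t-1} (1 + 4η c_s)² ≤ (1 + 4η D)^{2T}·(1 + 4η D/2)^{4T}·…, and in particular Π_{s=0}^{t-1}(1 + 4η c_s)² ≤ (1 + 4η D·2^{-i})^{4(i+1)T_i}. -/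
/-!
On phase `i`, of length `L i`, every factor is at most `b i`. If `b i ≤ b (i + 1) ^ k` while
`L (i + 1) = k * L i`, then `b i ^ L i ≤ b (i + 1) ^ L (i + 1)`: every earlier phase costs no more
than a full phase at the latest, smallest error level, so the first `i` phases cost at most
`b i ^ (i * L i)`. For the theorem `b i = (1 + x i) ^ 2` with `x i = 2 * x (i + 1)`, and
`1 + 2 y ≤ (1 + y) ^ 2` gives `b i ≤ b (i + 1) ^ 2`.
-/

open Finset

theorem prod_Ico_le_pow_card {R : Type*} [CommSemiring R] [PartialOrder R] [IsOrderedRing R]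
    {f : ℕ → R} {b : R} {m n : ℕ} (hf : ∀ s, 0 ≤ f s) (hfb : ∀ s, m ≤ s → s < n → f s ≤ b) :
    ∏ s ∈ Ico m n, f s ≤ b ^ (n - m) := by
  calc ∏ s ∈ Ico m n, f s ≤ ∏ _s ∈ Ico m n, b :=
        prod_le_prod (fun s _ ↦ hf s) fun s hs ↦ hfb s (mem_Ico.1 hs).1 (mem_Ico.1 hs).2
    _ = b ^ (n - m) := by rw [prod_const, Nat.card_Ico]

theorem prod_range_sum_le_pow_of_geometric_phases {R : Type*} [CommSemiring R] [PartialOrder R]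
    [IsOrderedRing R] {f b : ℕ → R} {L : ℕ → ℕ} {k : ℕ} (hf : ∀ s, 0 ≤ f s) (hb : ∀ i, 0 ≤ b i)
    (hL : ∀ i, L (i + 1) = k * L i) (hbk : ∀ i, b i ≤ b (i + 1) ^ k)
    (hphase : ∀ i s, ∑ j ∈ range i, L j ≤ s → s < ∑ j ∈ range (i + 1), L j → f s ≤ b i) :
    ∀ i, ∏ s ∈ range (∑ j ∈ range i, L j), f s ≤ b i ^ (i * L i)
  | 0 => by simp
  | i + 1 => by
    have hstart : ∑ j ∈ range i, L j ≤ ∑ j ∈ range (i + 1), L j := by simp [sum_range_succ]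
    have hphase_i := prod_Ico_le_pow_card hf (hphase i)
    rw [← prod_range_mul_prod_Ico _ hstart]
    calc (∏ s ∈ range (∑ j ∈ range i, L j), f s) *
          ∏ s ∈ Ico (∑ j ∈ range i, L j) (∑ j ∈ range (i + 1), L j), f s
        ≤ b i ^ (i * L i) * b i ^ L i := by
          gcongr
          · exact prod_nonneg fun s _ ↦ hf s
          · exact pow_nonneg (hb i) _
          · exact prod_range_sum_le_pow_of_geometric_phases hf hb hL hbk hphase i
          · simpa [sum_range_succ] using hphase_i
      _ = b i ^ ((i + 1) * L i) := by ring
      _ ≤ (b (i + 1) ^ k) ^ ((i + 1) * L i) := pow_le_pow_left₀ (hb i) (hbk i) _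
      _ = b (i + 1) ^ ((i + 1) * L (i + 1)) := by rw [← pow_mul, hL]; ring_nf

theorem sq_one_add_two_mul_le_sq_sq {R : Type*} [CommSemiring R] [PartialOrder R]
    [IsOrderedRing R] {y : R} (hy : 0 ≤ y) : (1 + 2 * y) ^ 2 ≤ ((1 + y) ^ 2) ^ 2 := by
  have h : 1 + 2 * y ≤ (1 + y) ^ 2 := by
    rw [show (1 + y) ^ 2 = 1 + 2 * y + y ^ 2 by ring]
    exact le_add_of_nonneg_right (pow_nonneg hy 2)
  exact pow_le_pow_left₀ (add_nonneg zero_le_one (mul_nonneg zero_le_two hy)) h 2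

theorem halving_errors_doubling_intervals_general (η D : ℝ) (hη : 0 < η) (hD : 0 < D)
    (T : ℕ) (c : ℕ → ℝ) (hc : ∀ t, 0 ≤ c t)
    (hphase : ∀ i t : ℕ, (∑ j ∈ Finset.range i, 2 ^ j * T) ≤ t →
      t < (∑ j ∈ Finset.range (i + 1), 2 ^ j * T) → c t ≤ D * (2 : ℝ) ^ (-(i : ℤ))) :
    ∀ i t : ℕ, t < (∑ j ∈ Finset.range (i + 1), 2 ^ j * T) →
      (∏ s ∈ Finset.range t, (1 + 4 * η * c s) ^ 2) ≤
        (1 + 4 * η * D * (2 : ℝ) ^ (-(i : ℤ))) ^ (4 * (i + 1) * (2 ^ i * T)) := by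
  intro i t ht
  let x : ℕ → ℝ := fun n ↦ 4 * η * D * 2 ^ (-(n : ℤ))
  have hx : ∀ n, 0 ≤ x n := fun n ↦ by positivity
  have hx_halve : ∀ n, x n = 2 * x (n + 1) := fun n ↦ by
    simp only [x, zpow_neg, zpow_natCast, pow_succ]; field_simp
  have hfactor : ∀ s, 1 ≤ 1 + 4 * η * c s := fun s ↦
    le_add_of_nonneg_right (mul_nonneg (by positivity) (hc s))
  have hphase_sq : ∀ n s, ∑ j ∈ range n, 2 ^ j * T ≤ s → s < ∑ j ∈ range (n + 1), 2 ^ j * T →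
      (1 + 4 * η * c s) ^ 2 ≤ (1 + x n) ^ 2 := fun n s h₁ h₂ ↦ by
    have := hphase n s h₁ h₂
    gcongr
    · linarith [hfactor s]
    · simp only [x, mul_assoc]; gcongr
  have hsq_halve : ∀ n, (1 + x n) ^ 2 ≤ ((1 + x (n + 1)) ^ 2) ^ 2 := fun n ↦
    hx_halve n ▸ sq_one_add_two_mul_le_sq_sq (hx (n + 1))
  calc ∏ s ∈ range t, (1 + 4 * η * c s) ^ 2
      ≤ ∏ s ∈ range (∑ j ∈ range (i + 1), 2 ^ j * T), (1 + 4 * η * c s) ^ 2 :=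
        prod_le_prod_of_subset_of_one_le (range_subset_range.2 ht.le)
          (fun s _ ↦ by positivity) fun s _ _ ↦ one_le_pow₀ (hfactor s)
    _ ≤ ((1 + x (i + 1)) ^ 2) ^ ((i + 1) * (2 ^ (i + 1) * T)) :=
        prod_range_sum_le_pow_of_geometric_phases (fun s ↦ by positivity) (fun n ↦ by positivity)
          (fun n ↦ by ring) hsq_halve hphase_sq (i + 1)
    _ = (1 + x (i + 1)) ^ (4 * (i + 1) * (2 ^ i * T)) := by rw [← pow_mul]; ring_nf
    _ ≤ (1 + x i) ^ (4 * (i + 1) * (2 ^ i * T)) := by gcongr; linarith [hx_halve i, hx (i + 1)]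

theorem halving_errors_doubling_intervals (η D : ℝ) (hη : 0 < η) (hD : 0 < D)
    (T : ℕ) (hT : 0 < T) (c : ℕ → ℝ) (hc : ∀ t, 0 ≤ c t)
    (hphase : ∀ i t : ℕ, (∑ j ∈ Finset.range i, 2 ^ j * T) ≤ t →
      t < (∑ j ∈ Finset.range (i + 1), 2 ^ j * T) → c t ≤ D * (2 : ℝ) ^ (-(i : ℤ))) :
    ∀ i t : ℕ, t < (∑ j ∈ Finset.range (i + 1), 2 ^ j * T) →
      (∏ s ∈ Finset.range t, (1 + 4 * η * c s) ^ 2) ≤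
        (1 + 4 * η * D * (2 : ℝ) ^ (-(i : ℤ))) ^ (4 * (i + 1) * (2 ^ i * T)) :=
  halving_errors_doubling_intervals_general η D hη hD T c hc hphase
end

section
/- Let w* > 0, η > 0, B > 0 with w* ≥ 20B and 4η·w* ≤ 1/4, |e_t| ≤ B for all t, and suppose 0 < w_0 < w* - 20B and w_t ≤ (6/5)w* for all t. Under the update w_{t+1} = w_t(1 - 4η(w_t - w* + e_t))², for each t with w_t ≤ w* - 20B we have w_{t+1} ≥ w_t·(1 + 4η·19B)² ≥ w_t·(1 + 152ηB); hence w_t grows at least geometrically with ratio (1 + 152ηB) while it remains below w* - 20B. -/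
theorem geometric_growth_below_target (wstar η B : ℝ) (w e : ℕ → ℝ)
    (hws : 0 < wstar) (hη : 0 < η) (hB : 0 < B) (hwsB : 20 * B ≤ wstar)
    (hη1 : 4 * η * wstar ≤ 1 / 4) (he : ∀ t, |e t| ≤ B)
    (hupd : ∀ t, w (t + 1) = w t * (1 - 4 * η * (w t - wstar + e t)) ^ 2)
    (hw0 : 0 < w 0) (hw0' : w 0 < wstar - 20 * B)
    (hub : ∀ t, w t ≤ (6 / 5) * wstar) (hpos : ∀ t, 0 < w t) :
    ∀ t, w t ≤ wstar - 20 * B →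
      w (t + 1) ≥ w t * (1 + 4 * η * (19 * B)) ^ 2 ∧
      w t * (1 + 4 * η * (19 * B)) ^ 2 ≥ w t * (1 + 152 * η * B) := by
  intro t ht
  have heB := abs_le.mp (he t)
  have hle : w t - wstar + e t ≤ -(19 * B) := by nlinarith [heB.2]
  have h1 : (1 : ℝ) + 4 * η * (19 * B) ≤ 1 - 4 * η * (w t - wstar + e t) := by
    nlinarith
  have hpos1 : (0 : ℝ) < 1 + 4 * η * (19 * B) := by positivity
  constructor
  · rw [hupd t]
    have := pow_le_pow_left₀ hpos1.le h1 2
    exact mul_le_mul_of_nonneg_left this (hpos t).le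
  · have : (1 : ℝ) + 152 * η * B ≤ (1 + 4 * η * (19 * B)) ^ 2 := by nlinarith [sq_nonneg (4*η*(19*B))]
    exact mul_le_mul_of_nonneg_left this (hpos t).le
end
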